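/- Let U : ℝⁿ → ℝ be convex and continuously differentiable with a minimizer s*. If s satisfies Nesterov's ODE s''(t) + (3/t) s'(t) + ∇U(s(t)) = 0 for t > 0, then the function E(t) = t²(U(s(t)) − U(s*)) + 2|s(t) + (t/2) s'(t) − s*|² is nonincreasing. -/

import Mathlib

/-!
Write `w = s + (t/2) s' - s*`. The ODE collapses the derivative of `w` to `-(t/2) ∇U(s)`, so the
velocity terms cancel in `E'` and `E'(t) = 2t (U(s) + ⟪∇U(s), s* - s⟫ - U(s*))`, which is `≤ 0`
because a convex function lies above its tangent planes.
-/

open Set AffineMap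

theorem ConvexOn.add_apply_sub_le_of_hasFDerivAt {E : Type*} [NormedAddCommGroup E]
    [NormedSpace ℝ E] {S : Set E} {f : E → ℝ} {f' : E →L[ℝ] ℝ} {x y : E}
    (hf : ConvexOn ℝ S f) (hx : x ∈ S) (hy : y ∈ S) (hf' : HasFDerivAt f f' x) :
    f x + f' (y - x) ≤ f y := by
  have hline : ConvexOn ℝ (lineMap x y ⁻¹' S) (f ∘ lineMap (k := ℝ) x y) := hf.comp_affineMap _
  have hderiv : HasDerivAt (f ∘ lineMap (k := ℝ) x y) (f' (y - x)) 0 :=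
    (by simpa using hf' : HasFDerivAt f f' (lineMap x y (0 : ℝ))).comp_hasDerivAt 0
      hasDerivAt_lineMap
  have hslope := hline.le_slope_of_hasDerivAt (by simpa) (by simpa) zero_lt_one hderiv
  simp only [slope_def_field, Function.comp_apply, lineMap_apply_one, lineMap_apply_zero,
    sub_zero, div_one] at hslope
  linarith

section

variable {E : Type*} [NormedAddCommGroup E] [InnerProductSpace ℝ E] [CompleteSpace E]

theorem ConvexOn.add_inner_sub_le_of_hasGradientAt {S : Set E} {f : E → ℝ} {g x y : E}
    (hf : ConvexOn ℝ S f) (hx : x ∈ S) (hy : y ∈ S) (hg : HasGradientAt f g x) :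
    f x + inner ℝ g (y - x) ≤ f y := by
  simpa using hf.add_apply_sub_le_of_hasFDerivAt hx hy (hasGradientAt_iff_hasFDerivAt.mp hg)

noncomputable def nesterovEnergy (U : E → ℝ) (x₀ : E) (s v : ℝ → E) (t : ℝ) : ℝ :=
  t ^ 2 * (U (s t) - U x₀) + 2 * ‖s t + (t / 2) • v t - x₀‖ ^ 2

theorem hasDerivAt_nesterovEnergy {U : E → ℝ} {x₀ a g : E} {s v : ℝ → E} {t : ℝ}
    (ht : t ≠ 0) (hs : HasDerivAt s (v t) t) (hv : HasDerivAt v a t)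
    (hU : HasGradientAt U g (s t)) (hode : a + (3 / t) • v t + g = 0) :
    HasDerivAt (nesterovEnergy U x₀ s v)
      (2 * t * (U (s t) + inner ℝ g (x₀ - s t) - U x₀)) t := by
  have hUs : HasDerivAt (U ∘ s) (inner ℝ g (v t)) t := by
    simpa using (hasGradientAt_iff_hasFDerivAt.mp hU).comp_hasDerivAt t hs
  have hw : HasDerivAt (fun τ => s τ + (τ / 2) • v τ - x₀) (-(t / 2) • g) t := by
    refine ((hs.add (((hasDerivAt_id' t).div_const 2).smul hv)).sub_const x₀).congr_deriv ?_
    have ha : a = -(3 / t) • v t - g := by linear_combination (norm := module) hode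
    rw [ha]
    match_scalars <;> field_simp
    ring
  refine (((hasDerivAt_pow 2 t).mul (hUs.sub_const (U x₀))).add
    (hw.norm_sq.const_mul 2)).congr_deriv ?_
  simp only [Function.comp_apply, inner_smul_right, real_inner_comm g, inner_sub_right,
    inner_add_right]
  push_cast
  ring

end

theorem stmt_5_general (n : ℕ) (U : EuclideanSpace ℝ (Fin n) → ℝ)
    (hU : ContDiff ℝ 1 U) (hUconv : ConvexOn ℝ Set.univ U)
    (sstar : EuclideanSpace ℝ (Fin n))
    (s : ℝ → EuclideanSpace ℝ (Fin n))
    (hs : ∀ t ∈ Set.Ioi (0 : ℝ), DifferentiableAt ℝ s t)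
    (hs' : ∀ t ∈ Set.Ioi (0 : ℝ), DifferentiableAt ℝ (deriv s) t)
    (hode : ∀ t ∈ Set.Ioi (0 : ℝ),
      deriv (deriv s) t + (3 / t) • deriv s t + gradient U (s t) = 0) :
    AntitoneOn (fun t => t ^ 2 * (U (s t) - U sstar)
      + 2 * ‖s t + (t / 2) • deriv s t - sstar‖ ^ 2) (Set.Ioi 0) := by
  have hgrad (x) : HasGradientAt U (gradient U x) x :=
    ((hU.differentiable one_ne_zero) x).hasGradientAt
  have hE : ∀ t ∈ Ioi (0 : ℝ), HasDerivAt (nesterovEnergy U sstar s (deriv s))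
      (2 * t * (U (s t) + inner ℝ (gradient U (s t)) (sstar - s t) - U sstar)) t :=
    fun t ht => hasDerivAt_nesterovEnergy ht.ne' (hs t ht).hasDerivAt (hs' t ht).hasDerivAt
      (hgrad _) (hode t ht)
  show AntitoneOn (nesterovEnergy U sstar s (deriv s)) (Ioi 0)
  refine antitoneOn_of_hasDerivWithinAt_nonpos (convex_Ioi 0)
    (f' := fun t => 2 * t * (U (s t) + inner ℝ (gradient U (s t)) (sstar - s t) - U sstar))
    (fun t ht => (hE t ht).continuousAt.continuousWithinAt) ?_ ?_ <;> rw [interior_Ioi]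
  · exact fun t ht => (hE t ht).hasDerivWithinAt
  · intro t ht
    have htangent := hUconv.add_inner_sub_le_of_hasGradientAt (mem_univ (s t)) (mem_univ sstar)
      (hgrad (s t))
    exact mul_nonpos_of_nonneg_of_nonpos (mul_pos two_pos ht).le (sub_nonpos.mpr htangent)

theorem stmt_5 (n : ℕ) (U : EuclideanSpace ℝ (Fin n) → ℝ)
    (hU : ContDiff ℝ 1 U) (hUconv : ConvexOn ℝ Set.univ U)
    (sstar : EuclideanSpace ℝ (Fin n)) (hmin : ∀ x, U sstar ≤ U x)
    (s : ℝ → EuclideanSpace ℝ (Fin n))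
    (hs : ∀ t ∈ Set.Ioi (0 : ℝ), DifferentiableAt ℝ s t)
    (hs' : ∀ t ∈ Set.Ioi (0 : ℝ), DifferentiableAt ℝ (deriv s) t)
    (hode : ∀ t ∈ Set.Ioi (0 : ℝ),
      deriv (deriv s) t + (3 / t) • deriv s t + gradient U (s t) = 0) :
    AntitoneOn (fun t => t ^ 2 * (U (s t) - U sstar)
      + 2 * ‖s t + (t / 2) • deriv s t - sstar‖ ^ 2) (Set.Ioi 0) :=
  stmt_5_general n U hU hUconv sstar s hs hs' hode
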